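/- arXiv:1611.01020 — 4 statements merged into one kernel-verified Lean document; each statement's English description precedes it below -/
import Mathlib

section
/- If P is an orthogonal projection on a Hilbert space H and X is a bounded operator satisfying Re⟨e^{X}ψ, ψ⟩ ≥ ρ‖ψ‖² for all ψ ∈ H with ρ > 0, then the operator I + P(e^X − I)P is invertible with ‖(I + P(e^X − I)P)^{-1}‖ ≤ 1/min(ρ,1). -/
/-!
With `Q = 1 - P`, `Re⟪(1 + P(A - 1)P)ψ, ψ⟫ = ‖Qψ‖² + Re⟪A Pψ, Pψ⟫ ≥ ‖Qψ‖² + ρ‖Pψ‖²`, which is at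
least `min ρ 1 * ‖ψ‖²` by Pythagoras. An operator on a Hilbert space that is coercive with
constant `c > 0` is invertible, and the bound `c‖x‖ ≤ ‖T x‖` gives `‖T⁻¹‖ ≤ c⁻¹`.
Only this lower bound on `A = e^X` enters.
-/

open RCLike
open scoped InnerProductSpace NNReal

namespace ContinuousLinearMap

variable {𝕜 E : Type*} [RCLike 𝕜] [NormedAddCommGroup E] [InnerProductSpace 𝕜 E]

theorem exists_inverse_norm_le_of_forall_le_re_inner [CompleteSpace E] (T : E →L[𝕜] E) {c : ℝ}
    (hc : 0 < c) (hT : ∀ x, c * ‖x‖ ^ 2 ≤ re ⟪T x, x⟫_𝕜) :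
    ∃ B : E →L[𝕜] E, T * B = 1 ∧ B * T = 1 ∧ ‖B‖ ≤ c⁻¹ := by
  lift c to ℝ≥0 using hc.le
  have hc' : 0 < c := mod_cast hc
  have hT' (x : E) : ‖x‖ ^ 2 * c ≤ ‖⟪T x, x⟫_𝕜‖ :=
    (mul_comm _ _).trans_le ((hT x).trans (re_le_norm _))
  have hunit := isUnit_of_forall_le_norm_inner_map T hc' hT'
  set B : E →L[𝕜] E := ↑hunit.unit⁻¹
  refine ⟨B, hunit.mul_val_inv, hunit.val_inv_mul, opNorm_le_bound _ (by positivity) fun y => ?_⟩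
  have hy : T (B y) = y := congr($(hunit.mul_val_inv) y)
  simpa only [hy, NNReal.coe_inv] using
    T.bound_of_antilipschitz (antilipschitz_of_forall_le_inner_map T hc' hT') (B y)

end ContinuousLinearMap

namespace LinearMap.IsSymmetricProjection

variable {𝕜 E : Type*} [RCLike 𝕜] [NormedAddCommGroup E] [InnerProductSpace 𝕜 E]
  {P : E →L[𝕜] E}

theorem inner_apply_sub_apply_eq_zero (hP : (P : E →ₗ[𝕜] E).IsSymmetricProjection) (x : E) :
    ⟪P x, x - P x⟫_𝕜 = 0 := by
  have hPP : P (P x) = P x := congr($(hP.isIdempotentElem.eq) x)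
  rw [← ContinuousLinearMap.coe_coe, hP.isSymmetric, ContinuousLinearMap.coe_coe, map_sub, hPP,
    sub_self, inner_zero_right]

theorem norm_sq_eq_add (hP : (P : E →ₗ[𝕜] E).IsSymmetricProjection) (x : E) :
    ‖x‖ ^ 2 = ‖P x‖ ^ 2 + ‖x - P x‖ ^ 2 := by
  simpa only [sq, add_sub_cancel] using norm_add_sq_eq_norm_sq_add_norm_sq_of_inner_eq_zero _ _
    (hP.inner_apply_sub_apply_eq_zero x)

theorem re_inner_one_add_compression (hP : (P : E →ₗ[𝕜] E).IsSymmetricProjection)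
    (A : E →L[𝕜] E) (x : E) :
    re ⟪(1 + P * (A - 1) * P) x, x⟫_𝕜 = ‖x - P x‖ ^ 2 + re ⟪A (P x), P x⟫_𝕜 := by
  have hinner :
      ⟪(1 + P * (A - 1) * P) x, x⟫_𝕜 = ⟪x, x⟫_𝕜 + ⟪A (P x), P x⟫_𝕜 - ⟪P x, P x⟫_𝕜 := by
    rw [_root_.add_apply, one_apply_eq_self, mul_apply_eq_comp, mul_apply_eq_comp,
      _root_.sub_apply, one_apply_eq_self, inner_add_left, ← ContinuousLinearMap.coe_coe P,
      hP.isSymmetric, inner_sub_left]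
    ring
  rw [hinner, map_sub, map_add, inner_self_eq_norm_sq, inner_self_eq_norm_sq, hP.norm_sq_eq_add x]
  ring

theorem min_mul_norm_sq_le_re_inner_one_add_compression
    (hP : (P : E →ₗ[𝕜] E).IsSymmetricProjection) {A : E →L[𝕜] E} {ρ : ℝ}
    (hA : ∀ x, ρ * ‖x‖ ^ 2 ≤ re ⟪A x, x⟫_𝕜) (x : E) :
    min ρ 1 * ‖x‖ ^ 2 ≤ re ⟪(1 + P * (A - 1) * P) x, x⟫_𝕜 := by
  rw [hP.re_inner_one_add_compression, hP.norm_sq_eq_add x, mul_add]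
  have hPx : min ρ 1 * ‖P x‖ ^ 2 ≤ ρ * ‖P x‖ ^ 2 := by gcongr; exact min_le_left _ _
  have hQx : min ρ 1 * ‖x - P x‖ ^ 2 ≤ ‖x - P x‖ ^ 2 :=
    mul_le_of_le_one_left (sq_nonneg _) (min_le_right _ _)
  linarith [hA (P x)]

end LinearMap.IsSymmetricProjection

/-- If `P` is an orthogonal projection and `Re⟨e^X ψ, ψ⟩ ≥ ρ‖ψ‖²` with `ρ > 0`,
then `I + P(e^X − I)P` is invertible with inverse of norm at most `1/min(ρ,1)`. -/
theorem stmt13 {H : Type*} [NormedAddCommGroup H] [InnerProductSpace ℂ H] [CompleteSpace H]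
    (P X : H →L[ℂ] H) (hP2 : P * P = P) (hPadj : ContinuousLinearMap.adjoint P = P)
    (ρ : ℝ) (hρ : 0 < ρ)
    (hX : ∀ ψ : H, ρ * ‖ψ‖ ^ 2 ≤ (inner ℂ ((NormedSpace.exp X) ψ) ψ : ℂ).re) :
    ∃ B : H →L[ℂ] H,
      (1 + P * (NormedSpace.exp X - 1) * P) * B = 1 ∧
      B * (1 + P * (NormedSpace.exp X - 1) * P) = 1 ∧
      ‖B‖ ≤ 1 / min ρ 1 := by
  have hP : (P : H →ₗ[ℂ] H).IsSymmetricProjection :=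
    (ContinuousLinearMap.isStarProjection_iff_isSymmetricProjection).1 ⟨hP2, hPadj⟩
  rw [one_div]
  exact (1 + P * (NormedSpace.exp X - 1) * P).exists_inverse_norm_le_of_forall_le_re_inner
    (lt_min hρ one_pos) (hP.min_mul_norm_sq_le_re_inner_one_add_compression hX)
end

section
/- Let U and L be bounded operators on ℓ²(ℕ) with L lower triangular and U upper triangular (with respect to the standard basis), i.e., P_n L P_n = P_n L and P_n U P_n = U P_n for every n, where P_n projects onto the first n coordinates. Suppose further that e^{-L}e^{L+U}e^{-U} − I is trace class. Then for every n, det(Q_n + P_n e^{L+U} P_n)·e^{−Tr P_n(L+U)P_n} = det(I + P_n(e^{-L}e^{L+U}e^{-U} − I)P_n), where Q_n = I − P_n. -/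
/-!
For an idempotent `e`, the elements `x` with `e x e = e x` form a closed subalgebra, so they are
stable under `exp`. With `e = P_n` this makes `e^{-L}` lower triangular and, using `1 - P_n`,
`e^{-U}` upper triangular. Taking the `n × n` block is multiplicative on `S * T` as soon as `S`
is lower or `T` is upper triangular, so the block of `e^{-L} e^{L+U} e^{-U}` is the product of the
three blocks. The blocks of `e^{-L}` and `e^{-U}` are triangular, and since the diagonal entry
`T ↦ T_jj` is multiplicative on triangular operators, their diagonals are `e^{-L_jj}` and
`e^{-U_jj}`; their determinants are therefore `e^{-Tr P_n L P_n}` and `e^{-Tr P_n U P_n}`.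
-/

open NormedSpace

namespace IsIdempotentElem

variable {R A : Type*} [CommSemiring R] {e x : A}

variable (R) in
def lowerSubalgebra [Semiring A] [Algebra R A] (he : IsIdempotentElem e) : Subalgebra R A where
  carrier := {x | e * x * e = e * x}
  mul_mem' {x y} (hx : e * x * e = e * x) (hy : e * y * e = e * y) :=
    calc e * (x * y) * e = e * x * e * y * e := by rw [hx]; simp only [mul_assoc]
      _ = e * x * (e * y * e) := by simp only [mul_assoc]
      _ = e * (x * y) := by rw [hy, ← mul_assoc, hx, mul_assoc]
  add_mem' {x y} (hx : e * x * e = e * x) (hy : e * y * e = e * y) := by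
    simp only [Set.mem_ofPred_eq, mul_add, add_mul, hx, hy]
  algebraMap_mem' r := by
    show e * algebraMap R A r * e = e * algebraMap R A r
    rw [← Algebra.commutes, mul_assoc, he.eq]

theorem mem_lowerSubalgebra [Semiring A] [Algebra R A] (he : IsIdempotentElem e) :
    x ∈ he.lowerSubalgebra R ↔ e * x * e = e * x :=
  Iff.rfl

theorem mem_lowerSubalgebra_one_sub [Ring A] [Algebra R A] (he : IsIdempotentElem e) :
    x ∈ he.one_sub.lowerSubalgebra R ↔ e * x * e = x * e := by
  have : (1 - e) * x * (1 - e) = (1 - e) * x - (x * e - e * x * e) := by noncomm_ring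
  rw [mem_lowerSubalgebra, this, sub_eq_self, sub_eq_zero, eq_comm]

theorem isClosed_lowerSubalgebra [Semiring A] [Algebra R A] [TopologicalSpace A]
    [IsTopologicalSemiring A] [T2Space A] (he : IsIdempotentElem e) :
    IsClosed (he.lowerSubalgebra R : Set A) :=
  isClosed_eq (by fun_prop) (by fun_prop)

end IsIdempotentElem

theorem ContinuousLinearMap.map_exp_of_map_pow {𝕜 A B : Type*} [RCLike 𝕜] [NormedRing A]
    [NormedAlgebra 𝕜 A] [CompleteSpace A] [NormedRing B] [NormedAlgebra 𝕜 B]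
    (f : A →L[𝕜] B) {x : A} (h : ∀ m, f (x ^ m) = f x ^ m) : f (exp x) = exp (f x) := by
  rw [exp_eq_tsum 𝕜, exp_eq_tsum 𝕜, f.map_tsum (expSeries_summable' x)]
  simp only [map_smul, h]

noncomputable section

namespace lp

variable {𝕜 : Type*} [RCLike 𝕜] {p : ENNReal} [Fact (1 ≤ p)]

local notation "ℓ" => lp (fun _ : ℕ => 𝕜) p

variable (𝕜 p) in
def coordProj (n : ℕ) : ℓ →L[𝕜] ℓ :=
  ∑ i : Fin n, (lp.evalCLM 𝕜 (fun _ : ℕ => 𝕜) p i).smulRight (lp.single p (i : ℕ) 1)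

theorem coordProj_apply (n : ℕ) (x : ℓ) (k : ℕ) :
    coordProj 𝕜 p n x k = if k < n then x k else 0 := by
  simp only [coordProj, sum_apply, lp.coeFn_sum, Finset.sum_apply,
    ContinuousLinearMap.smulRight_apply, lp.coeFn_smul, Pi.smul_apply, lp.single_apply, smul_eq_mul]
  change ∑ i : Fin n, x i * (Pi.single (i : ℕ) (1 : 𝕜) : ℕ → 𝕜) k = _
  simp only [Pi.single_apply, mul_ite, mul_one, mul_zero]
  rw [Fin.sum_univ_eq_sum_range (fun i => if k = i then x i else 0), Finset.sum_ite_eq]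
  simp only [Finset.mem_range]

theorem coordProj_single (n k : ℕ) :
    coordProj 𝕜 p n (lp.single p k (1 : 𝕜)) = if k < n then lp.single p k 1 else 0 := by
  ext j
  simp only [coordProj_apply, lp.single_apply]
  split_ifs <;> simp_all [Pi.single_apply] <;> omega

variable (𝕜 p) in
theorem isIdempotentElem_coordProj (n : ℕ) : IsIdempotentElem (coordProj 𝕜 p n) := by
  ext x k
  simp only [mul_apply_eq_comp, coordProj_apply]
  split_ifs <;> rfl

/-- The `n × n` matrix of `P_n T P_n` in the basis `lp.single p k 1`, `k < n`. -/
def finiteSection (n : ℕ) : (ℓ →L[𝕜] ℓ) →ₗ[𝕜] Matrix (Fin n) (Fin n) 𝕜 where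
  toFun T := Matrix.of fun j k => T (lp.single p k 1) j
  map_add' _ _ := rfl
  map_smul' _ _ := rfl

theorem finiteSection_apply (n : ℕ) (T : ℓ →L[𝕜] ℓ) (j k : Fin n) :
    finiteSection n T j k = T (lp.single p k 1) j :=
  rfl

variable {n : ℕ}

theorem finiteSection_one : finiteSection n (1 : ℓ →L[𝕜] ℓ) = 1 := by
  ext j k
  simp [finiteSection_apply, lp.single_apply, Matrix.one_apply, Pi.single_apply, Fin.val_inj]

theorem finiteSection_mul_coordProj_mul (S T : ℓ →L[𝕜] ℓ) :
    finiteSection n (S * coordProj 𝕜 p n * T) = finiteSection n S * finiteSection n T := by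
  ext j k
  simp only [finiteSection_apply, mul_apply_eq_comp, coordProj, sum_apply,
    ContinuousLinearMap.smulRight_apply, map_sum, map_smul, lp.coeFn_sum, Finset.sum_apply,
    lp.coeFn_smul, Pi.smul_apply, smul_eq_mul, Matrix.mul_apply]
  exact Finset.sum_congr rfl fun i _ => mul_comm _ _

theorem finiteSection_coordProj_mul (T : ℓ →L[𝕜] ℓ) :
    finiteSection n (coordProj 𝕜 p n * T) = finiteSection n T := by
  ext j k
  simp only [finiteSection_apply, mul_apply_eq_comp, coordProj_apply, if_pos j.isLt]

theorem finiteSection_mul_coordProj (T : ℓ →L[𝕜] ℓ) :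
    finiteSection n (T * coordProj 𝕜 p n) = finiteSection n T := by
  ext j k
  simp only [finiteSection_apply, mul_apply_eq_comp, coordProj_single, if_pos k.isLt]

theorem finiteSection_mul_of_lower {S : ℓ →L[𝕜] ℓ}
    (hS : coordProj 𝕜 p n * S * coordProj 𝕜 p n = coordProj 𝕜 p n * S)
    (T : ℓ →L[𝕜] ℓ) :
    finiteSection n (S * T) = finiteSection n S * finiteSection n T :=
  calc finiteSection n (S * T) = finiteSection n (coordProj 𝕜 p n * (S * T)) :=
        (finiteSection_coordProj_mul _).symm
    _ = finiteSection n (coordProj 𝕜 p n * (S * coordProj 𝕜 p n * T)) := by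
        rw [← mul_assoc, ← hS]; simp only [mul_assoc]
    _ = finiteSection n S * finiteSection n T := by
        rw [finiteSection_coordProj_mul, finiteSection_mul_coordProj_mul]

theorem finiteSection_mul_of_upper (S : ℓ →L[𝕜] ℓ) {T : ℓ →L[𝕜] ℓ}
    (hT : coordProj 𝕜 p n * T * coordProj 𝕜 p n = T * coordProj 𝕜 p n) :
    finiteSection n (S * T) = finiteSection n S * finiteSection n T :=
  calc finiteSection n (S * T) = finiteSection n (S * T * coordProj 𝕜 p n) :=
        (finiteSection_mul_coordProj _).symm
    _ = finiteSection n (S * coordProj 𝕜 p n * T * coordProj 𝕜 p n) := by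
        rw [mul_assoc S T, ← hT]; simp only [mul_assoc]
    _ = finiteSection n S * finiteSection n T := by
        rw [finiteSection_mul_coordProj, finiteSection_mul_coordProj_mul]

variable (𝕜 p) in
def lowerTriangular : Subalgebra 𝕜 (ℓ →L[𝕜] ℓ) :=
  ⨅ n, (isIdempotentElem_coordProj 𝕜 p n).lowerSubalgebra 𝕜

variable (𝕜 p) in
def upperTriangular : Subalgebra 𝕜 (ℓ →L[𝕜] ℓ) :=
  ⨅ n, (isIdempotentElem_coordProj 𝕜 p n).one_sub.lowerSubalgebra 𝕜

variable {T : lp (fun _ : ℕ => 𝕜) p →L[𝕜] lp (fun _ : ℕ => 𝕜) p}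

theorem mem_lowerTriangular :
    T ∈ lowerTriangular 𝕜 p ↔
      ∀ n, coordProj 𝕜 p n * T * coordProj 𝕜 p n = coordProj 𝕜 p n * T :=
  Algebra.mem_iInf

theorem mem_upperTriangular :
    T ∈ upperTriangular 𝕜 p ↔
      ∀ n, coordProj 𝕜 p n * T * coordProj 𝕜 p n = T * coordProj 𝕜 p n :=
  Algebra.mem_iInf.trans <| forall_congr' fun n =>
    (isIdempotentElem_coordProj 𝕜 p n).mem_lowerSubalgebra_one_sub

theorem exp_mem_lowerTriangular (hT : T ∈ lowerTriangular 𝕜 p) :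
    exp T ∈ lowerTriangular 𝕜 p := by
  refine exp_mem ?_ hT
  simp only [lowerTriangular, Algebra.coe_iInf]
  exact isClosed_iInter fun n => IsIdempotentElem.isClosed_lowerSubalgebra _

theorem exp_mem_upperTriangular (hT : T ∈ upperTriangular 𝕜 p) :
    exp T ∈ upperTriangular 𝕜 p := by
  refine exp_mem ?_ hT
  simp only [upperTriangular, Algebra.coe_iInf]
  exact isClosed_iInter fun n => IsIdempotentElem.isClosed_lowerSubalgebra _

theorem apply_single_eq_zero_of_mem_lowerTriangular (hT : T ∈ lowerTriangular 𝕜 p) {j k : ℕ}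
    (hjk : j < k) : T (lp.single p k 1) j = 0 := by
  have h := congr($(mem_lowerTriangular.1 hT k) (lp.single p k 1) j)
  simp only [mul_apply_eq_comp, coordProj_single, lt_irrefl, if_false, map_zero, coordProj_apply,
    if_pos hjk, lp.coeFn_zero, Pi.zero_apply] at h
  exact h.symm

theorem apply_single_eq_zero_of_mem_upperTriangular (hT : T ∈ upperTriangular 𝕜 p) {j k : ℕ}
    (hkj : k < j) : T (lp.single p k 1) j = 0 := by
  have h := congr($(mem_upperTriangular.1 hT j) (lp.single p k 1) j)
  simp only [mul_apply_eq_comp, coordProj_single, if_pos hkj, coordProj_apply, lt_irrefl,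
    if_false] at h
  exact h.symm

theorem finiteSection_isLowerTriangular (hT : T ∈ lowerTriangular 𝕜 p) :
    (finiteSection n T).IsLowerTriangular :=
  fun _ _ hjk => apply_single_eq_zero_of_mem_lowerTriangular hT hjk

theorem finiteSection_isUpperTriangular (hT : T ∈ upperTriangular 𝕜 p) :
    (finiteSection n T).IsUpperTriangular :=
  fun _ _ hkj => apply_single_eq_zero_of_mem_upperTriangular hT hkj

theorem apply_single_self_mul_of_mem_lowerTriangular {S : ℓ →L[𝕜] ℓ}
    (hS : S ∈ lowerTriangular 𝕜 p) (hT : T ∈ lowerTriangular 𝕜 p) (j : ℕ) :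
    (S * T) (lp.single p j 1) j = S (lp.single p j 1) j * T (lp.single p j 1) j := by
  have h := congr($(finiteSection_mul_of_lower (mem_lowerTriangular.1 hS (j + 1)) T)
    (Fin.last j) (Fin.last j))
  rwa [Matrix.mul_apply, Fin.sum_univ_castSucc, Finset.sum_eq_zero fun i _ => ?_, zero_add] at h
  exact mul_eq_zero_of_right _ (apply_single_eq_zero_of_mem_lowerTriangular hT i.isLt)

theorem apply_single_self_mul_of_mem_upperTriangular {S : ℓ →L[𝕜] ℓ}
    (hS : S ∈ upperTriangular 𝕜 p) (hT : T ∈ upperTriangular 𝕜 p) (j : ℕ) :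
    (S * T) (lp.single p j 1) j = S (lp.single p j 1) j * T (lp.single p j 1) j := by
  have h := congr($(finiteSection_mul_of_upper S (mem_upperTriangular.1 hT (j + 1)))
    (Fin.last j) (Fin.last j))
  rwa [Matrix.mul_apply, Fin.sum_univ_castSucc, Finset.sum_eq_zero fun i _ => ?_, zero_add] at h
  exact mul_eq_zero_of_left (apply_single_eq_zero_of_mem_upperTriangular hS i.isLt) _

theorem exp_apply_single_self {s : Subalgebra 𝕜 (ℓ →L[𝕜] ℓ)} {j : ℕ}
    (hs : ∀ x ∈ s, ∀ y ∈ s,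
      (x * y) (lp.single p j 1) j = x (lp.single p j 1) j * y (lp.single p j 1) j)
    (hT : T ∈ s) : exp T (lp.single p j 1) j = exp (T (lp.single p j 1) j) := by
  let δ := (lp.evalCLM 𝕜 (fun _ : ℕ => 𝕜) p j).comp
    (ContinuousLinearMap.apply 𝕜 ℓ (lp.single (E := fun _ : ℕ => 𝕜) p j 1))
  refine δ.map_exp_of_map_pow fun m => ?_
  induction m with
  | zero => rw [pow_zero, pow_zero]; exact lp.single_apply_self (E := fun _ : ℕ => 𝕜) p j 1
  | succ m ih => exact (hs _ (pow_mem hT m) T hT).trans (by rw [pow_succ, ← ih]; rfl)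

theorem det_finiteSection_exp_of_mem_lowerTriangular (hT : T ∈ lowerTriangular 𝕜 p) :
    (finiteSection n (exp T)).det = exp (∑ j : Fin n, T (lp.single p j 1) j) := by
  rw [Matrix.det_of_isLowerTriangular _
    (finiteSection_isLowerTriangular (exp_mem_lowerTriangular hT)), exp_sum]
  exact Finset.prod_congr rfl fun j _ => exp_apply_single_self
    (fun _ hx _ hy => apply_single_self_mul_of_mem_lowerTriangular hx hy j) hT

theorem det_finiteSection_exp_of_mem_upperTriangular (hT : T ∈ upperTriangular 𝕜 p) :
    (finiteSection n (exp T)).det = exp (∑ j : Fin n, T (lp.single p j 1) j) := by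
  rw [Matrix.det_of_isUpperTriangular
    (finiteSection_isUpperTriangular (exp_mem_upperTriangular hT)), exp_sum]
  exact Finset.prod_congr rfl fun j _ => exp_apply_single_self
    (fun _ hx _ hy => apply_single_self_mul_of_mem_upperTriangular hx hy j) hT

end lp

end

theorem stmt14_general (L U : lp (fun _ : ℕ => ℂ) 2 →L[ℂ] lp (fun _ : ℕ => ℂ) 2)
    (P : ℕ → (lp (fun _ : ℕ => ℂ) 2 →L[ℂ] lp (fun _ : ℕ => ℂ) 2))
    (hP : ∀ (n : ℕ) (x : lp (fun _ : ℕ => ℂ) 2) (k : ℕ), (P n x) k = if k < n then x k else 0)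
    (hL : ∀ n, P n * L * P n = P n * L)
    (hU : ∀ n, P n * U * P n = U * P n)
    (n : ℕ) :
    Matrix.det (Matrix.of fun j k : Fin n =>
        ((NormedSpace.exp (L + U)) (lp.single 2 (k : ℕ) 1)) (j : ℕ)) *
      Complex.exp (-(∑ j : Fin n, ((L + U) (lp.single 2 (j : ℕ) 1)) (j : ℕ))) =
    Matrix.det (Matrix.of fun j k : Fin n =>
        (if j = k then 1 else 0) +
          ((NormedSpace.exp (-L) * NormedSpace.exp (L + U) * NormedSpace.exp (-U) - 1)
            (lp.single 2 (k : ℕ) 1)) (j : ℕ)) := by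
  obtain rfl : P = lp.coordProj ℂ 2 := funext fun n => ContinuousLinearMap.ext fun x =>
    lp.ext <| funext fun k => by rw [hP, lp.coordProj_apply]
  have hL' : -L ∈ lp.lowerTriangular ℂ 2 := neg_mem (lp.mem_lowerTriangular.2 hL)
  have hU' : -U ∈ lp.upperTriangular ℂ 2 := neg_mem (lp.mem_upperTriangular.2 hU)
  have hsplit : lp.finiteSection n (exp (-L) * exp (L + U) * exp (-U)) =
      lp.finiteSection n (exp (-L)) * lp.finiteSection n (exp (L + U)) *
        lp.finiteSection n (exp (-U)) := by
    rw [lp.finiteSection_mul_of_upper _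
        (lp.mem_upperTriangular.1 (lp.exp_mem_upperTriangular hU') n),
      lp.finiteSection_mul_of_lower (lp.mem_lowerTriangular.1 (lp.exp_mem_lowerTriangular hL') n)]
  have hRHS (X : lp (fun _ : ℕ => ℂ) 2 →L[ℂ] lp (fun _ : ℕ => ℂ) 2) :
      Matrix.of (fun j k : Fin n =>
          (if j = k then 1 else 0) + (X - 1) (lp.single 2 (k : ℕ) 1) j) = lp.finiteSection n X :=
    calc _ = 1 + lp.finiteSection n (X - 1) := rfl
      _ = lp.finiteSection n X := by rw [map_sub, lp.finiteSection_one, add_sub_cancel]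
  have htrace : -∑ j : Fin n, (L + U) (lp.single 2 (j : ℕ) 1) j =
      ∑ j : Fin n, (-U) (lp.single 2 (j : ℕ) 1) j +
        ∑ j : Fin n, (-L) (lp.single 2 (j : ℕ) 1) j := by
    simp [Finset.sum_add_distrib]
  change (lp.finiteSection n (exp (L + U))).det * _ = _
  rw [hRHS, hsplit, Matrix.det_mul, Matrix.det_mul,
    lp.det_finiteSection_exp_of_mem_lowerTriangular hL',
    lp.det_finiteSection_exp_of_mem_upperTriangular hU', ← Complex.exp_eq_exp_ℂ, htrace,
    Complex.exp_add]
  ring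

/-- For `L` lower triangular and `U` upper triangular on `ℓ²(ℕ)` (triangularity
expressed via `P_n L P_n = P_n L` and `P_n U P_n = U P_n`), with
`e^{-L}e^{L+U}e^{-U} − I` trace class (here: entrywise absolutely summable), one has
`det(Q_n + P_n e^{L+U} P_n)·e^{−Tr P_n(L+U)P_n}
  = det(I + P_n(e^{-L}e^{L+U}e^{-U} − I)P_n)` for every `n`, both sides being
determinants of the corresponding `n×n` blocks. -/
theorem stmt14 (L U : lp (fun _ : ℕ => ℂ) 2 →L[ℂ] lp (fun _ : ℕ => ℂ) 2)
    (P : ℕ → (lp (fun _ : ℕ => ℂ) 2 →L[ℂ] lp (fun _ : ℕ => ℂ) 2))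
    (hP : ∀ (n : ℕ) (x : lp (fun _ : ℕ => ℂ) 2) (k : ℕ), (P n x) k = if k < n then x k else 0)
    (hL : ∀ n, P n * L * P n = P n * L)
    (hU : ∀ n, P n * U * P n = U * P n)
    (hTC : Summable fun p : ℕ × ℕ =>
      ‖((NormedSpace.exp (-L) * NormedSpace.exp (L + U) * NormedSpace.exp (-U) - 1)
          (lp.single 2 p.2 1)) p.1‖)
    (n : ℕ) :
    Matrix.det (Matrix.of fun j k : Fin n =>
        ((NormedSpace.exp (L + U)) (lp.single 2 (k : ℕ) 1)) (j : ℕ)) *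
      Complex.exp (-(∑ j : Fin n, ((L + U) (lp.single 2 (j : ℕ) 1)) (j : ℕ))) =
    Matrix.det (Matrix.of fun j k : Fin n =>
        (if j = k then 1 else 0) +
          ((NormedSpace.exp (-L) * NormedSpace.exp (L + U) * NormedSpace.exp (-U) - 1)
            (lp.single 2 (k : ℕ) 1)) (j : ℕ)) :=
  stmt14_general L U P hP hL hU n
end

section
/- Define Laurent polynomials s_k, v_k by the recurrence (s_k, v_k)ᵀ = M(z)·(s_{k-1}, v_{k-1})ᵀ with (s₀,v₀) = (1,0), where M(z) is the 2×2 matrix with entries M₁₁ = s₁(z) = −|α|² + ρ²/z, M₁₂ = −z v₁(z), M₂₁ = v₁(z) = −|α|ρ(1 + 1/z), M₂₂ = s₁(1/z), and ρ = √(1−|α|²) for fixed α with |α| < 1. Then for all k ≥ 0 and z = e^{iθ}, with ω = 2 arccos(ρ cos(θ/2)): s_k(z) = cos(kω) − i·(sin(kω)/sin(ω/2))·ρ sin(θ/2) and v_k(z) = −(sin(kω)/sin(ω/2))·|α|·e^{−iθ/2}. -/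
/-!
For `z = e^{iθ}` the transfer matrix `M(z)` has determinant `(|α|² + ρ²)² = 1` and trace
`-2|α|² + 2ρ² cos θ = 4ρ² cos² (θ/2) - 2 = 4 cos² (ω/2) - 2 = 2 cos ω`. By Cayley–Hamilton,
`(s_k, v_k)` therefore obeys the recurrence `x_{k+2} = 2 cos ω · x_{k+1} - x_k`, which is also
satisfied by `cos (kω)` and `sin (kω)`; so the closed form only has to be checked at `k = 0, 1`.
-/
/-- The pair `(s_k, v_k)` of Laurent polynomials from the constant-Verblunsky
recurrence: `(s_k, v_k)ᵀ = M(z)(s_{k-1}, v_{k-1})ᵀ`, `(s₀,v₀) = (1,0)`, with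
`M₁₁ = s₁(z) = −|α|² + ρ²/z`, `M₁₂ = −z v₁(z)`, `M₂₁ = v₁(z) = −|α|ρ(1+1/z)`,
`M₂₂ = s₁(1/z)`, `ρ = √(1−|α|²)`. -/
noncomputable def svSeq (α z : ℂ) : ℕ → ℂ × ℂ
  | 0 => (1, 0)
  | k + 1 =>
    let a : ℝ := ‖α‖
    let ρ : ℝ := Real.sqrt (1 - a ^ 2)
    let s1 : ℂ := -(a : ℂ) ^ 2 + (ρ : ℂ) ^ 2 / z
    let s1t : ℂ := -(a : ℂ) ^ 2 + (ρ : ℂ) ^ 2 * z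
    let v1 : ℂ := -(a : ℂ) * (ρ : ℂ) * (1 + 1 / z)
    let p := svSeq α z k
    (s1 * p.1 - z * v1 * p.2, v1 * p.1 + s1t * p.2)

theorem seq_eq_of_two_step_recurrence {M : Type*} (F : M → M → M) {u v : ℕ → M}
    (hu : ∀ k, u (k + 2) = F (u k) (u (k + 1))) (hv : ∀ k, v (k + 2) = F (v k) (v (k + 1)))
    (h0 : u 0 = v 0) (h1 : u 1 = v 1) : u = v := by
  funext k
  induction k using Nat.twoStepInduction with
  | zero => exact h0
  | one => exact h1
  | more k ihk ihk1 => rw [hu, hv, ihk, ihk1]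

theorem sq_ofReal_sqrt_one_sub_norm_sq {α : ℂ} (hα : ‖α‖ ≤ 1) :
    ((Real.sqrt (1 - ‖α‖ ^ 2) : ℝ) : ℂ) ^ 2 = 1 - (‖α‖ : ℂ) ^ 2 := by
  rw [← Complex.ofReal_pow, Real.sq_sqrt (by nlinarith [norm_nonneg α])]
  push_cast
  ring

theorem svSeq_add_two (α z : ℂ) (hα : ‖α‖ ≤ 1) (hz : z ≠ 0) (k : ℕ) :
    svSeq α z (k + 2) =
      (-2 * (‖α‖ : ℂ) ^ 2 + (1 - (‖α‖ : ℂ) ^ 2) * (z + z⁻¹)) • svSeq α z (k + 1) -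
        svSeq α z k := by
  set a : ℂ := (‖α‖ : ℂ)
  set ρ : ℂ := ((Real.sqrt (1 - ‖α‖ ^ 2) : ℝ) : ℂ)
  have hρ : ρ ^ 2 = 1 - a ^ 2 := sq_ofReal_sqrt_one_sub_norm_sq hα
  have hdet : (-a ^ 2 + ρ ^ 2 / z) * (-a ^ 2 + ρ ^ 2 * z) + z * (-a * ρ * (1 + 1 / z)) ^ 2 = 1 := by
    field_simp
    linear_combination (a ^ 2 + ρ ^ 2 + 1) * z * hρ
  have htr : -2 * a ^ 2 + (1 - a ^ 2) * (z + z⁻¹) = (-a ^ 2 + ρ ^ 2 / z) + (-a ^ 2 + ρ ^ 2 * z) := by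
    rw [← hρ]; ring
  rw [htr]
  simp only [svSeq]
  ext <;> simp only [Prod.smul_fst, Prod.smul_snd, Prod.fst_sub, Prod.snd_sub, smul_eq_mul]
  · linear_combination (-(svSeq α z k).1) * hdet
  · linear_combination (-(svSeq α z k).2) * hdet

theorem Real.cos_nat_add_two_mul (k : ℕ) (ω : ℝ) :
    Real.cos ((k + 2 : ℕ) * ω) = 2 * Real.cos ω * Real.cos ((k + 1 : ℕ) * ω) - Real.cos (k * ω) := by
  have h := Real.cos_add_cos ((k + 2 : ℕ) * ω) (k * ω)
  push_cast at h ⊢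
  rw [show (((k : ℝ) + 2) * ω + k * ω) / 2 = (k + 1) * ω by ring,
    show (((k : ℝ) + 2) * ω - k * ω) / 2 = ω by ring] at h
  linarith

theorem Real.sin_nat_add_two_mul (k : ℕ) (ω : ℝ) :
    Real.sin ((k + 2 : ℕ) * ω) = 2 * Real.cos ω * Real.sin ((k + 1 : ℕ) * ω) - Real.sin (k * ω) := by
  have h := Real.sin_add_sin ((k + 2 : ℕ) * ω) (k * ω)
  push_cast at h ⊢
  rw [show (((k : ℝ) + 2) * ω + k * ω) / 2 = (k + 1) * ω by ring,
    show (((k : ℝ) + 2) * ω - k * ω) / 2 = ω by ring] at h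
  linarith

noncomputable def svClosed (a ρ θ ω : ℝ) (k : ℕ) : ℂ × ℂ :=
  (((Real.cos (k * ω) : ℝ) : ℂ) -
      Complex.I * ((Real.sin (k * ω) / Real.sin (ω / 2) : ℝ) : ℂ) * (ρ : ℂ) *
        ((Real.sin (θ / 2) : ℝ) : ℂ),
    -((Real.sin (k * ω) / Real.sin (ω / 2) : ℝ) : ℂ) * (a : ℂ) *
      Complex.exp (-(θ / 2 : ℝ) * Complex.I))

theorem svClosed_add_two (a ρ θ ω : ℝ) (k : ℕ) :
    svClosed a ρ θ ω (k + 2) =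
      (2 * Real.cos ω : ℂ) • svClosed a ρ θ ω (k + 1) - svClosed a ρ θ ω k := by
  simp only [svClosed, Real.cos_nat_add_two_mul, Real.sin_nat_add_two_mul]
  ext <;> simp only [Prod.smul_fst, Prod.smul_snd, Prod.fst_sub, Prod.snd_sub, smul_eq_mul] <;>
    push_cast <;> ring

theorem svSeq_exp_eq_svClosed (α : ℂ) (hα : ‖α‖ ≤ 1) (θ ω : ℝ)
    (hω : Real.cos (ω / 2) = Real.sqrt (1 - ‖α‖ ^ 2) * Real.cos (θ / 2))
    (hω' : Real.sin (ω / 2) ≠ 0) :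
    svSeq α (Complex.exp (θ * Complex.I)) =
      svClosed ‖α‖ (Real.sqrt (1 - ‖α‖ ^ 2)) θ ω := by
  set ρ := Real.sqrt (1 - ‖α‖ ^ 2) with hρdef
  -- in terms of `u = e^{iθ/2}` every remaining identity is one between Laurent polynomials in `u`
  set u := Complex.exp ((θ / 2 : ℝ) * Complex.I)
  have hρ : (ρ : ℂ) ^ 2 = 1 - (‖α‖ : ℂ) ^ 2 := sq_ofReal_sqrt_one_sub_norm_sq hα
  have hu : u ≠ 0 := Complex.exp_ne_zero _
  have hz : Complex.exp (θ * Complex.I) = u ^ 2 := by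
    rw [← Complex.exp_nat_mul]; push_cast; ring_nf
  have hE : Complex.exp (-(θ / 2 : ℝ) * Complex.I) = u⁻¹ := by
    rw [neg_mul, Complex.exp_neg]
  have hcos : ((Real.cos (θ / 2) : ℝ) : ℂ) = (u + u⁻¹) / 2 := by
    rw [Complex.ofReal_cos, Complex.cos, ← hE]
  have hsin : ((Real.sin (θ / 2) : ℝ) : ℂ) = (u⁻¹ - u) * Complex.I / 2 := by
    rw [Complex.ofReal_sin, Complex.sin, ← hE]
  have hcosω : ((Real.cos ω : ℝ) : ℂ) = 2 * (ρ : ℂ) ^ 2 * ((u + u⁻¹) / 2) ^ 2 - 1 := by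
    rw [← hcos, show ω = 2 * (ω / 2) by ring, Real.cos_two_mul, hω]; push_cast; ring_nf
  have hsinω : ((Real.sin ω / Real.sin (ω / 2) : ℝ) : ℂ) = 2 * ρ * ((u + u⁻¹) / 2) := by
    rw [← hcos, show ω = 2 * (ω / 2) by ring, Real.sin_two_mul, hω]; field_simp; push_cast; ring_nf
  refine seq_eq_of_two_step_recurrence (fun p q => (2 * Real.cos ω : ℂ) • q - p) ?_
    (svClosed_add_two _ _ _ _) ?_ ?_
  · intro k
    rw [svSeq_add_two α _ hα (Complex.exp_ne_zero _), hz, hcosω]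
    congr 2
    field_simp
    linear_combination -(u ^ 2 + 1) ^ 2 * hρ
  · simp [svSeq, svClosed]
  · simp only [svSeq, svClosed, Nat.cast_one, one_mul, hz, hE, hsin, hcosω, hsinω, ← hρdef,
      Prod.mk.injEq]
    constructor
    · field_simp
      linear_combination (-2 * u ^ 2) * hρ + (ρ : ℂ) ^ 2 * (1 - u ^ 4) * Complex.I_sq
    · field_simp
      ring

/-- For `z = e^{iθ}`, `θ ∈ (0,2π)`, and `ω = 2 arccos(ρ cos(θ/2))`:
`s_k(z) = cos(kω) − i (sin(kω)/sin(ω/2)) ρ sin(θ/2)` and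
`v_k(z) = −(sin(kω)/sin(ω/2)) |α| e^{−iθ/2}`. -/
theorem stmt15 (α : ℂ) (hα : ‖α‖ < 1) (θ : ℝ)
    (hθ : θ ∈ Set.Ioo 0 (2 * Real.pi)) (k : ℕ) :
    (svSeq α (Complex.exp (θ * Complex.I)) k).1 =
        ((Real.cos (k * (2 * Real.arccos (Real.sqrt (1 - ‖α‖ ^ 2) *
            Real.cos (θ / 2)))) : ℝ) : ℂ) -
          Complex.I * ((Real.sin (k * (2 * Real.arccos (Real.sqrt (1 - ‖α‖ ^ 2) *
              Real.cos (θ / 2)))) / Real.sin ((2 * Real.arccos (Real.sqrt (1 - ‖α‖ ^ 2) *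
              Real.cos (θ / 2))) / 2) : ℝ) : ℂ) *
            ((Real.sqrt (1 - ‖α‖ ^ 2) : ℝ) : ℂ) * ((Real.sin (θ / 2) : ℝ) : ℂ) ∧
      (svSeq α (Complex.exp (θ * Complex.I)) k).2 =
        -((Real.sin (k * (2 * Real.arccos (Real.sqrt (1 - ‖α‖ ^ 2) *
            Real.cos (θ / 2)))) / Real.sin ((2 * Real.arccos (Real.sqrt (1 - ‖α‖ ^ 2) *
            Real.cos (θ / 2))) / 2) : ℝ) : ℂ) * ((‖α‖ : ℝ) : ℂ) *
          Complex.exp (-(θ / 2 : ℝ) * Complex.I) := by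
  set b := Real.sqrt (1 - ‖α‖ ^ 2) * Real.cos (θ / 2)
  have hs : 0 < Real.sin (θ / 2) :=
    Real.sin_pos_of_pos_of_lt_pi (by linarith [hθ.1]) (by linarith [hθ.2])
  have hρ : Real.sqrt (1 - ‖α‖ ^ 2) ^ 2 ≤ 1 := by
    rw [Real.sq_sqrt (by nlinarith [norm_nonneg α])]; nlinarith [norm_nonneg α]
  have hb : b ^ 2 < 1 := by
    nlinarith [Real.sin_sq_add_cos_sq (θ / 2), sq_nonneg (Real.cos (θ / 2))]
  obtain ⟨hb₁, hb₂⟩ := abs_lt.mp (sq_lt_one_iff_abs_lt_one b |>.mp hb)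
  have hhalf : 2 * Real.arccos b / 2 = Real.arccos b := by ring
  have key := congrFun (svSeq_exp_eq_svClosed α hα.le θ (2 * Real.arccos b)
    (by rw [hhalf, Real.cos_arccos hb₁.le hb₂.le])
    (by
      rw [hhalf]
      exact (Real.sin_pos_of_pos_of_lt_pi (Real.arccos_pos.mpr hb₂)
        (Real.arccos_lt_pi.mpr hb₁)).ne')) k
  exact Prod.ext_iff.mp key
end

section
/- With s_k and v_k as in the constant-Verblunsky recurrence (s₁(z) = −|α|² + ρ²/z, v₁(z) = −|α|ρ(1+1/z), ρ = √(1−|α|²)), the identities v_k(z) = −(|α|/ρ)·(s_k(1/z) − s_k(z))/(z − 1) and v_k(1/z) = z·v_k(z) hold for all k ∈ ℤ, where s_{−k}(z) = s_k(1/z) and v_{−k} = −v_k. -/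
/-- `s_k` for `k ∈ ℤ`, with `s_{−k}(z) = s_k(1/z)`. -/
noncomputable def sZ (α z : ℂ) (k : ℤ) : ℂ :=
  if 0 ≤ k then (svSeq α z k.toNat).1 else (svSeq α z⁻¹ (-k).toNat).1

/-- `v_k` for `k ∈ ℤ`, with `v_{−k} = −v_k`. -/
noncomputable def vZ (α z : ℂ) (k : ℤ) : ℂ :=
  if 0 ≤ k then (svSeq α z k.toNat).2 else -(svSeq α z (-k).toNat).2

section VerblunskySeq

variable {K : Type*} [Field K] (a ρ : K)

def verblunskySeq (z : K) : ℕ → K × K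
  | 0 => (1, 0)
  | n + 1 =>
    let p := verblunskySeq z n
    ((-a ^ 2 + ρ ^ 2 / z) * p.1 - z * (-a * ρ * (1 + 1 / z)) * p.2,
      -a * ρ * (1 + 1 / z) * p.1 + (-a ^ 2 + ρ ^ 2 * z) * p.2)

variable {a ρ} {z : K}

theorem verblunskySeq_inv (hz : z ≠ 0) (n : ℕ) :
    (verblunskySeq a ρ z⁻¹ n).2 = z * (verblunskySeq a ρ z n).2 ∧
      a * ((verblunskySeq a ρ z⁻¹ n).1 - (verblunskySeq a ρ z n).1) =
        -((z - 1) * ρ * (verblunskySeq a ρ z n).2) := by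
  have hzz : z * z⁻¹ = 1 := mul_inv_cancel₀ hz
  induction n with
  | zero => simp [verblunskySeq]
  | succ n ih =>
    obtain ⟨hv, hs⟩ := ih
    simp only [verblunskySeq, div_eq_mul_inv, one_mul, inv_inv]
    constructor
    · linear_combination (-a ^ 2 + ρ ^ 2 * z⁻¹) * hv - ρ * (1 + z) * hs +
        (a * ρ * (verblunskySeq a ρ z n).1 + ρ ^ 2 * (verblunskySeq a ρ z n).2) * hzz
    · linear_combination a ^ 2 * ρ * z⁻¹ * (1 + z) * hv + (-a ^ 2 + ρ ^ 2 * z) * hs +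
        (a ^ 2 * ρ * z * (verblunskySeq a ρ z n).2 - a * ρ ^ 2 * (verblunskySeq a ρ z n).1) * hzz

theorem verblunskySeq_snd_eq (hz : z ≠ 0) (hz1 : z ≠ 1) (hρ : ρ ≠ 0) (n : ℕ) :
    (verblunskySeq a ρ z n).2 =
      -(a / ρ) * ((verblunskySeq a ρ z⁻¹ n).1 - (verblunskySeq a ρ z n).1) / (z - 1) := by
  have hz1' : z - 1 ≠ 0 := sub_ne_zero.mpr hz1
  rw [neg_mul, div_mul_eq_mul_div, (verblunskySeq_inv hz n).2]
  field_simp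

end VerblunskySeq

theorem svSeq_eq_verblunskySeq (α z : ℂ) :
    svSeq α z = verblunskySeq (‖α‖ : ℂ) (√(1 - ‖α‖ ^ 2) : ℂ) z := by
  funext n
  induction n with
  | zero => rfl
  | succ n ih => simp only [svSeq, verblunskySeq, ih]

/-- The identities `v_k(z) = −(|α|/ρ)(s_k(1/z) − s_k(z))/(z−1)` and
`v_k(1/z) = z v_k(z)` hold for all `k ∈ ℤ`. -/
theorem stmt16 (α : ℂ) (hα : ‖α‖ < 1) (z : ℂ) (hz : z ≠ 0) (hz1 : z ≠ 1) (k : ℤ) :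
    vZ α z k = -(((‖α‖ : ℝ) : ℂ) / ((Real.sqrt (1 - ‖α‖ ^ 2) : ℝ) : ℂ)) *
        (sZ α z⁻¹ k - sZ α z k) / (z - 1) ∧
      vZ α z⁻¹ k = z * vZ α z k := by
  have hρ : ((√(1 - ‖α‖ ^ 2) : ℝ) : ℂ) ≠ 0 :=
    Complex.ofReal_ne_zero.mpr (Real.sqrt_ne_zero'.mpr (by nlinarith [norm_nonneg α]))
  rcases k with n | n
  · simp only [vZ, sZ, Int.ofNat_eq_natCast, Nat.cast_nonneg, if_true, Int.toNat_natCast,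
      svSeq_eq_verblunskySeq]
    exact ⟨verblunskySeq_snd_eq hz hz1 hρ n, (verblunskySeq_inv hz n).1⟩
  · simp only [vZ, sZ, Int.negSucc_not_nonneg, if_false, Int.neg_negSucc, Int.toNat_natCast,
      inv_inv, svSeq_eq_verblunskySeq]
    constructor
    · rw [verblunskySeq_snd_eq hz hz1 hρ]
      ring
    · rw [(verblunskySeq_inv hz _).1, mul_neg]
end
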